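/- Let m be an odd positive integer with m ≢ 1 (mod 3), m(m+1) not divisible by the square of any odd prime, and m+1 not a multiple of 8. Set d = (2m+1)² − 2. Suppose D = X ∪ (−X) ⊆ S^{d-1}(2m+1) is a tight spherical 5-design (so ⟨x,y⟩ = ±1 for distinct x,y ∈ X). Assume further: (a) ⟨λ,λ⟩ ≡ 0 (mod 4) for all λ ∈ Λ₊ (where Λ₊ is the even-coefficient-sum sublattice of the lattice Λ generated by X), and (b) with Γ = (1/√2)Λ₊, one has Γ*/Γ ≅ ℤ/2ℤ. Then there is no α in the dual lattice Λ* with ⟨α,x⟩ ∈ {0,±1} for all x ∈ X; i.e., D is not of minimal type. -/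

import Mathlib

open scoped RealInnerProductSpace

/-- The dual lattice (as an additive subgroup) of an additive subgroup of Euclidean
space: all vectors whose inner products with elements of `Γ` are integers. -/
noncomputable def dualSubgroup {d : ℕ} (Γ : AddSubgroup (EuclideanSpace ℝ (Fin d))) :
    AddSubgroup (EuclideanSpace ℝ (Fin d)) where
  carrier := {v | ∀ γ ∈ Γ, ∃ z : ℤ, ⟪v, γ⟫ = (z : ℝ)}
  zero_mem' := fun γ _ => ⟨0, by simp⟩
  add_mem' := by
    intro a b ha hb γ hγ
    obtain ⟨z1, hz1⟩ := ha γ hγ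
    obtain ⟨z2, hz2⟩ := hb γ hγ
    refine ⟨z1 + z2, ?_⟩
    rw [inner_add_left, hz1, hz2]
    push_cast
    ring
  neg_mem' := by
    intro a ha γ hγ
    obtain ⟨z, hz⟩ := ha γ hγ
    refine ⟨-z, ?_⟩
    rw [inner_neg_left, hz]
    push_cast
    ring

/-- The sublattice `Λ₊` of the lattice generated by `X`: integer combinations of the
elements of `X` whose coefficient sum is even. -/
noncomputable def evenSumSpan {d : ℕ} (X : Finset (EuclideanSpace ℝ (Fin d))) :
    AddSubgroup (EuclideanSpace ℝ (Fin d)) where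
  carrier := {v | ∃ c : {x // x ∈ X} → ℤ, Even (∑ x, c x) ∧
      v = ∑ x : {x // x ∈ X}, (c x : ℝ) • (x : EuclideanSpace ℝ (Fin d))}
  zero_mem' := ⟨0, by simp, by simp⟩
  add_mem' := by
    rintro a b ⟨c₁, hc₁, rfl⟩ ⟨c₂, hc₂, rfl⟩
    refine ⟨c₁ + c₂, ?_, ?_⟩
    · simpa [Finset.sum_add_distrib] using hc₁.add hc₂
    · rw [← Finset.sum_add_distrib]
      refine Finset.sum_congr rfl fun x _ => ?_
      simp [add_smul]
  neg_mem' := by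
    rintro a ⟨c, hc, rfl⟩
    refine ⟨-c, ?_, ?_⟩
    · simpa using hc.neg
    · rw [← Finset.sum_neg_distrib]
      refine Finset.sum_congr rfl fun x _ => ?_
      simp [neg_smul]

/-! The Gram matrix of `X` has odd integer entries, so `⟪v, x⟫` is even for `v ∈ Λ₊` and `x ∈ X`;
hence `x ∉ Λ₊` and `x / 2 ∈ Λ₊*`. After scaling by `√2`, both `√2 α` and `x / √2` lie in `Γ*`, the
latter outside `Γ`. As `Γ*/Γ` has order two, `2α ∈ Λ₊` or `2α - x ∈ Λ₊`, and the second case is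
excluded by parity because `⟪α, x⟫ ∈ ℤ`. So `2α ∈ Λ₊`, and by (a) `⟪α, α⟫` is an integer. On the
other hand `⟪α, x⟫ ∈ {0, ±1}` turns the fourth moment into the second, which forces
`⟪α, α⟫ = (d + 2) / (3k) = (2m + 1) / 3`. -/

set_option linter.deprecated false

section GroupOfOrderTwo

variable {G : Type*} [AddCommGroup G] {H K : AddSubgroup G}

lemma neg_add_mem_of_card_quotient_eq_two (hK : Nat.card (K ⧸ H.addSubgroupOf K) = 2)
    {a b : G} (haK : a ∈ K) (hbK : b ∈ K) (haH : a ∉ H) (hbH : b ∉ H) : -a + b ∈ H := by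
  have hne : ∀ {c : G} (hcK : c ∈ K), c ∉ H →
      (QuotientAddGroup.mk ⟨c, hcK⟩ : K ⧸ H.addSubgroupOf K) ≠ 0 := fun _ hcH h0 =>
    hcH (AddSubgroup.mem_addSubgroupOf.mp ((QuotientAddGroup.eq_zero_iff _).mp h0))
  have hab := ((Nat.card_eq_two_iff' 0).mp hK).unique (hne haK haH) (hne hbK hbH)
  exact AddSubgroup.mem_addSubgroupOf.mp (QuotientAddGroup.eq.mp hab)

end GroupOfOrderTwo

section RealInnerProductSpace

variable {E : Type*} [NormedAddCommGroup E] [InnerProductSpace ℝ E]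

def HasOddGram (X : Finset E) : Prop :=
  ∀ x ∈ X, ∀ y ∈ X, ∃ n : ℤ, Odd n ∧ ⟪x, y⟫ = n

lemma hasOddGram_of_inner_eq {X : Finset E} {m : ℕ}
    (hnorm : ∀ x ∈ X, ⟪x, x⟫ = 2 * (m : ℝ) + 1)
    (hang : ∀ x ∈ X, ∀ y ∈ X, x ≠ y → ⟪x, y⟫ = 1 ∨ ⟪x, y⟫ = -1) : HasOddGram X := by
  intro x hx y hy
  rcases eq_or_ne x y with rfl | hxy
  · exact ⟨2 * m + 1, odd_two_mul_add_one _, by rw [hnorm x hx]; push_cast; ring⟩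
  · rcases hang x hx y hy hxy with h | h
    · exact ⟨1, odd_one, by simp [h]⟩
    · exact ⟨-1, by decide, by simp [h]⟩

lemma inner_self_eq_div_of_moments {D : Finset E} {α : E} {a b : ℝ}
    (hα : α ≠ 0) (hD : D.Nonempty) (hb : b ≠ 0)
    (hα4 : ∀ x ∈ D, ⟪α, x⟫ ^ 4 = ⟪α, x⟫ ^ 2)
    (h2 : ∑ x ∈ D, ⟪α, x⟫ ^ 2 = a * D.card * ⟪α, α⟫)
    (h4 : ∑ x ∈ D, ⟪α, x⟫ ^ 4 = b * D.card * ⟪α, α⟫ ^ 2) :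
    ⟪α, α⟫ = a / b := by
  rw [Finset.sum_congr rfl hα4, h2] at h4
  have hN : ⟪α, α⟫ ≠ 0 := inner_self_ne_zero.mpr hα
  have hC : (D.card : ℝ) ≠ 0 := by exact_mod_cast hD.card_pos.ne'
  rw [eq_div_iff hb]
  apply mul_left_cancel₀ (mul_ne_zero hC hN)
  linear_combination -h4

end RealInnerProductSpace

section Lattices

variable {d : ℕ} {X : Finset (EuclideanSpace ℝ (Fin d))}

lemma evenSumSpan_le_closure : evenSumSpan X ≤ AddSubgroup.closure (X : Set _) := by
  rintro v ⟨c, -, rfl⟩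
  refine AddSubgroup.sum_mem _ fun y _ => ?_
  rw [Int.cast_smul_eq_zsmul]
  exact AddSubgroup.zsmul_mem _ (AddSubgroup.subset_closure y.2) _

lemma dualSubgroup_anti {H K : AddSubgroup (EuclideanSpace ℝ (Fin d))} (h : H ≤ K) :
    dualSubgroup K ≤ dualSubgroup H :=
  fun _ hv γ hγ => hv γ (h hγ)

lemma smul_mem_dualSubgroup_comap {H : AddSubgroup (EuclideanSpace ℝ (Fin d))} {c : ℝ}
    {v : EuclideanSpace ℝ (Fin d)} (hv : v ∈ dualSubgroup H) :
    c • v ∈ dualSubgroup (H.comap (DistribMulAction.toAddMonoidHom _ c)) := by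
  intro γ hγ
  obtain ⟨z, hz⟩ := hv _ hγ
  refine ⟨z, ?_⟩
  rwa [real_inner_smul_left, ← real_inner_smul_right]

lemma sqrt_two_smul_mem_comap_iff {H : AddSubgroup (EuclideanSpace ℝ (Fin d))}
    {v : EuclideanSpace ℝ (Fin d)} :
    √2 • v ∈ H.comap (DistribMulAction.toAddMonoidHom _ √2) ↔ (2 : ℝ) • v ∈ H := by
  rw [AddSubgroup.mem_comap, DistribMulAction.toAddMonoidHom_apply, smul_smul,
    Real.mul_self_sqrt zero_le_two]

namespace HasOddGram

variable (hX : HasOddGram X) {x : EuclideanSpace ℝ (Fin d)} (hx : x ∈ X)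
include hX hx

lemma exists_inner_eq_two_mul {v : EuclideanSpace ℝ (Fin d)} (hv : v ∈ evenSumSpan X) :
    ∃ n : ℤ, ⟪v, x⟫ = 2 * n := by
  obtain ⟨c, hc, rfl⟩ := hv
  choose n hn_odd hn using fun y : X => hX y y.2 x hx
  have hsum : ⟪∑ y, (c y : ℝ) • (y : EuclideanSpace ℝ (Fin d)), x⟫ =
      ((∑ y, c y * n y : ℤ) : ℝ) := by
    simp [sum_inner, real_inner_smul_left, hn]
  -- `n y ≡ 1 (mod 2)`, so the sum has the parity of `∑ y, c y`
  have heven : Even (∑ y, c y * n y) := by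
    have hsplit : ∑ y, c y * n y = ∑ y, c y + ∑ y, c y * (n y - 1) := by
      rw [← Finset.sum_add_distrib]
      exact Finset.sum_congr rfl fun y _ => by ring
    rw [hsplit]
    exact hc.add (Finset.even_sum _ fun y _ => ((hn_odd y).sub_odd odd_one).mul_left _)
  obtain ⟨r, hr⟩ := heven
  exact ⟨r, by rw [hsum, hr]; push_cast; ring⟩

lemma notMem_evenSumSpan : x ∉ evenSumSpan X := by
  intro h
  obtain ⟨n, hn⟩ := hX.exists_inner_eq_two_mul hx h
  obtain ⟨k, hk_odd, hk⟩ := hX x hx x hx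
  rw [hk] at hn
  exact Int.not_even_iff_odd.mpr hk_odd ⟨n, by exact_mod_cast hn.trans (two_mul _)⟩

lemma inv_two_smul_mem_dualSubgroup : (2 : ℝ)⁻¹ • x ∈ dualSubgroup (evenSumSpan X) := by
  intro γ hγ
  obtain ⟨n, hn⟩ := hX.exists_inner_eq_two_mul hx hγ
  exact ⟨n, by rw [real_inner_smul_left, real_inner_comm, hn]; ring⟩

lemma two_smul_mem_evenSumSpan {Γ : AddSubgroup (EuclideanSpace ℝ (Fin d))}
    (hΓ : Γ = (evenSumSpan X).comap (DistribMulAction.toAddMonoidHom _ √2))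
    (hb : Nat.card (dualSubgroup Γ ⧸ Γ.addSubgroupOf (dualSubgroup Γ)) = 2)
    {α : EuclideanSpace ℝ (Fin d)} (hα : α ∈ dualSubgroup (AddSubgroup.closure (X : Set _))) :
    (2 : ℝ) • α ∈ evenSumSpan X := by
  subst hΓ
  have hβ := smul_mem_dualSubgroup_comap (c := √2) (dualSubgroup_anti evenSumSpan_le_closure hα)
  have hδ := smul_mem_dualSubgroup_comap (c := √2) (hX.inv_two_smul_mem_dualSubgroup hx)
  have hδΓ :
      √2 • (2 : ℝ)⁻¹ • x ∉ (evenSumSpan X).comap (DistribMulAction.toAddMonoidHom _ √2) := by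
    rw [sqrt_two_smul_mem_comap_iff, smul_inv_smul₀ two_ne_zero]
    exact hX.notMem_evenSumSpan hx
  by_contra hα2
  have hdiff := neg_add_mem_of_card_quotient_eq_two hb hβ hδ
    (by rwa [sqrt_two_smul_mem_comap_iff]) hδΓ
  rw [← smul_neg, ← smul_add, sqrt_two_smul_mem_comap_iff, smul_add, smul_neg,
    smul_inv_smul₀ two_ne_zero] at hdiff
  obtain ⟨n, hn⟩ := hX.exists_inner_eq_two_mul hx hdiff
  obtain ⟨z, hz⟩ := hα x (AddSubgroup.subset_closure hx)
  obtain ⟨k, hk_odd, hk⟩ := hX x hx x hx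
  rw [inner_add_left, inner_neg_left, real_inner_smul_left, hz, hk] at hn
  refine Int.not_even_iff_odd.mpr hk_odd ⟨n + z, Int.cast_injective (α := ℝ) ?_⟩
  push_cast
  linarith

end HasOddGram

end Lattices

theorem stmt14_general (m : ℕ) (hm3 : m % 3 ≠ 1)
    (d : ℕ) (hd : d = (2 * m + 1) ^ 2 - 2)
    [DecidableEq (EuclideanSpace ℝ (Fin d))]
    (X D : Finset (EuclideanSpace ℝ (Fin d))) (hX : X.Nonempty)
    (hD : D = X ∪ X.image fun v => -v)
    (hnorm : ∀ x ∈ X, ⟪x, x⟫ = 2 * (m : ℝ) + 1)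
    (hang : ∀ x ∈ X, ∀ y ∈ X, x ≠ y → ⟪x, y⟫ = 1 ∨ ⟪x, y⟫ = -1)
    (h2mom : ∀ y : EuclideanSpace ℝ (Fin d),
      ∑ x ∈ D, ⟪y, x⟫ ^ 2 = ((2 * (m : ℝ) + 1) / d) * D.card * ⟪y, y⟫)
    (h4mom : ∀ y : EuclideanSpace ℝ (Fin d),
      ∑ x ∈ D, ⟪y, x⟫ ^ 4
        = (3 * (2 * (m : ℝ) + 1) ^ 2 / (d * (d + 2))) * D.card * ⟪y, y⟫ ^ 2)
    (ha : ∀ v ∈ evenSumSpan X, ∃ z : ℤ, ⟪v, v⟫ = 4 * (z : ℝ))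
    (Γ : AddSubgroup (EuclideanSpace ℝ (Fin d)))
    (hΓ : Γ = (evenSumSpan X).comap
      (DistribMulAction.toAddMonoidHom (EuclideanSpace ℝ (Fin d)) (Real.sqrt 2)))
    (hb : Nat.card (↥(dualSubgroup Γ) ⧸ Γ.addSubgroupOf (dualSubgroup Γ)) = 2) :
    ¬ ∃ α ∈ dualSubgroup (AddSubgroup.closure (X : Set (EuclideanSpace ℝ (Fin d)))),
        α ≠ 0 ∧ ∀ x ∈ X, ⟪α, x⟫ = 0 ∨ ⟪α, x⟫ = 1 ∨ ⟪α, x⟫ = -1 := by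
  rintro ⟨α, hαdual, hα0, hαX⟩
  obtain ⟨x₀, hx₀⟩ := hX
  obtain ⟨z, hz⟩ := ha _
    ((hasOddGram_of_inner_eq hnorm hang).two_smul_mem_evenSumSpan hx₀ hΓ hb hαdual)
  rw [real_inner_smul_left, real_inner_smul_right] at hz
  have hd0 : d ≠ 0 := by rintro rfl; exact hα0 (Subsingleton.elim _ _)
  have hdk : (d : ℝ) + 2 = (2 * m + 1) ^ 2 := by
    have : d + 2 = (2 * m + 1) ^ 2 := by generalize (2 * m + 1) ^ 2 = K at hd; omega
    exact_mod_cast this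
  have hα4 : ∀ x ∈ D, ⟪α, x⟫ ^ 4 = ⟪α, x⟫ ^ 2 := by
    have htri : ∀ t : ℝ, t = 0 ∨ t = 1 ∨ t = -1 → t ^ 4 = t ^ 2 := by
      rintro t (rfl | rfl | rfl) <;> norm_num
    simp only [hD, Finset.mem_union, Finset.mem_image]
    rintro _ (hx | ⟨x, hx, rfl⟩)
    · exact htri _ (hαX _ hx)
    · rw [inner_neg_right, neg_pow_two, Even.neg_pow (by decide)]
      exact htri _ (hαX x hx)
  have hDne : D.Nonempty := ⟨x₀, by rw [hD]; exact Finset.mem_union_left _ hx₀⟩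
  have hN := inner_self_eq_div_of_moments hα0 hDne (by positivity) hα4 (h2mom α) (h4mom α)
  have h3 : (3 * z : ℝ) = 2 * m + 1 := by
    rw [← hdk] at hN
    field_simp at hN
    linarith
  have : 3 * z = 2 * (m : ℤ) + 1 := by exact_mod_cast h3
  omega

theorem stmt14 (m : ℕ) (hm0 : 0 < m) (hodd : Odd m) (hm3 : m % 3 ≠ 1)
    (hsq : ∀ p : ℕ, p.Prime → Odd p → ¬ (p ^ 2 ∣ m * (m + 1)))
    (h8 : ¬ (8 ∣ (m + 1)))
    (d : ℕ) (hd : d = (2 * m + 1) ^ 2 - 2)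
    [DecidableEq (EuclideanSpace ℝ (Fin d))]
    (X D : Finset (EuclideanSpace ℝ (Fin d))) (hX : X.Nonempty)
    (hD : D = X ∪ X.image fun v => -v)
    (hnorm : ∀ x ∈ X, ⟪x, x⟫ = 2 * (m : ℝ) + 1)
    (hang : ∀ x ∈ X, ∀ y ∈ X, x ≠ y → ⟪x, y⟫ = 1 ∨ ⟪x, y⟫ = -1)
    (h2mom : ∀ y : EuclideanSpace ℝ (Fin d),
      ∑ x ∈ D, ⟪y, x⟫ ^ 2 = ((2 * (m : ℝ) + 1) / d) * D.card * ⟪y, y⟫)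
    (h4mom : ∀ y : EuclideanSpace ℝ (Fin d),
      ∑ x ∈ D, ⟪y, x⟫ ^ 4
        = (3 * (2 * (m : ℝ) + 1) ^ 2 / (d * (d + 2))) * D.card * ⟪y, y⟫ ^ 2)
    (ha : ∀ v ∈ evenSumSpan X, ∃ z : ℤ, ⟪v, v⟫ = 4 * (z : ℝ))
    (Γ : AddSubgroup (EuclideanSpace ℝ (Fin d)))
    (hΓ : Γ = (evenSumSpan X).comap
      (DistribMulAction.toAddMonoidHom (EuclideanSpace ℝ (Fin d)) (Real.sqrt 2)))
    (hb : Nat.card (↥(dualSubgroup Γ) ⧸ Γ.addSubgroupOf (dualSubgroup Γ)) = 2) :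
    ¬ ∃ α ∈ dualSubgroup (AddSubgroup.closure (X : Set (EuclideanSpace ℝ (Fin d)))),
        α ≠ 0 ∧ ∀ x ∈ X, ⟪α, x⟫ = 0 ∨ ⟪α, x⟫ = 1 ∨ ⟪α, x⟫ = -1 :=
  stmt14_general m hm3 d hd X D hX hD hnorm hang h2mom h4mom ha Γ hΓ hb
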